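/- Let p ∈ ℂ satisfy p⁶ = −45p. Then: (i) σ(p,0,1) = 0; (ii) the partial derivative σ₁(p,0,1) = p⁶·(2/15) − p²·0 + 1, equals 1 if p = 0 and equals −5 if p ≠ 0; in particular σ₁(p,0,1) ≠ 0; (iii) there exist an open neighborhood U ⊆ ℂ² of the point (0,1) and a holomorphic (complex-analytic) function φ : U → ℂ such that φ(0,1) = p and σ(φ(w₃,w₅),w₃,w₅) = 0 for all (w₃,w₅) ∈ U. -/

import Mathlib

/-! For a root `p` of `p⁶ = -45p` we have `p = 0` or `p⁵ = -45`, which gives (i) and (ii) by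
direct computation. Since `σ₁ = ∂σ/∂w₁` does not vanish at `(p, 0, 1)`, (iii) is the analytic
implicit function theorem. The latter comes from the inverse function theorem for the map
`(y, x) ↦ (y, f (y, x))`: its local inverse is analytic wherever its derivative is invertible,
that is, wherever `∂f/∂x` is. -/

/- Context: the Schur–Weierstrass polynomial
σ(w₁,w₃,w₅) = w₁w₅ − w₃² − (1/3)w₁³w₃ + (1/45)w₁⁶, with
σ₁(w₁,w₃,w₅) = ∂σ/∂w₁ = w₅ − w₁²w₃ + (2/15)w₁⁵. -/

noncomputable section

def sg (w1 w3 w5 : ℂ) : ℂ :=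
  w1 * w5 - w3 ^ 2 - (1 / 3) * w1 ^ 3 * w3 + (1 / 45) * w1 ^ 6

def sg1 (w1 w3 w5 : ℂ) : ℂ :=
  w5 - w1 ^ 2 * w3 + (2 / 15) * w1 ^ 5

open Set Filter Topology ContinuousLinearMap

section ImplicitFunction

variable {𝕜 : Type*} [NontriviallyNormedField 𝕜]
  {E : Type*} [NormedAddCommGroup E] [NormedSpace 𝕜 E]
  {F : Type*} [NormedAddCommGroup F] [NormedSpace 𝕜 F]
  {G : Type*} [NormedAddCommGroup G] [NormedSpace 𝕜 G]

theorem ContinuousLinearMap.isInvertible_toSpanSingleton {c : 𝕜} (hc : c ≠ 0) :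
    (toSpanSingleton 𝕜 c).IsInvertible :=
  ⟨ContinuousLinearEquiv.unitsEquivAut 𝕜 (Units.mk0 c hc), by ext; simp⟩

theorem isOpen_setOf_analyticAt_and_isInvertible_comp_inr [CompleteSpace F] [CompleteSpace G]
    (f : E × F → G) :
    IsOpen {z | AnalyticAt 𝕜 f z ∧ (fderiv 𝕜 f z ∘L inr 𝕜 E F).IsInvertible} :=
  ContinuousOn.isOpen_inter_preimage (s := {z | AnalyticAt 𝕜 f z})
    (f := fun z => fderiv 𝕜 f z ∘L inr 𝕜 E F) (t := range ((↑) : (F ≃L[𝕜] G) → F →L[𝕜] G))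
    (fun _ hz => (hz.fderiv.continuousAt.clm_comp continuousAt_const).continuousWithinAt)
    (isOpen_analyticAt 𝕜 f) ContinuousLinearEquiv.isOpen

theorem AnalyticAt.hasStrictFDerivAt_prodMk_fst {f : E × F → G} {z : E × F} (hf : AnalyticAt 𝕜 f z)
    {e : F ≃L[𝕜] G} (he : (e : F →L[𝕜] G) = fderiv 𝕜 f z ∘L inr 𝕜 E F) :
    HasStrictFDerivAt (fun w => (w.1, f w))
      ((ContinuousLinearEquiv.refl 𝕜 E).skewProd e (fderiv 𝕜 f z ∘L inl 𝕜 E F) :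
        E × F →L[𝕜] E × G) z := by
  refine (hasStrictFDerivAt_fst.prodMk hf.hasStrictFDerivAt).congr_fderiv ?_
  refine ContinuousLinearMap.ext fun w => ?_
  simp only [ContinuousLinearEquiv.coe_coe, ContinuousLinearEquiv.skewProd_apply,
    prod_apply, coe_fst', ContinuousLinearEquiv.refl_apply]
  rw [← ContinuousLinearEquiv.coe_coe e, he, add_comm, comp_inl_add_comp_inr]

theorem AnalyticAt.exists_analyticOnNhd_implicitFunction [CompleteSpace E] [CompleteSpace F]
    [CompleteSpace G] {f : E × F → G} {b : E} {a : F} (hf : AnalyticAt 𝕜 f (b, a))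
    (hd : (fderiv 𝕜 (fun x => f (b, x)) a).IsInvertible) :
    ∃ U : Set E, IsOpen U ∧ b ∈ U ∧ ∃ φ : E → F, AnalyticOnNhd 𝕜 φ U ∧ φ b = a ∧
      ∀ y ∈ U, f (y, φ y) = f (b, a) := by
  set S := {z | AnalyticAt 𝕜 f z ∧ (fderiv 𝕜 f z ∘L inr 𝕜 E F).IsInvertible}
  have hS : IsOpen S := isOpen_setOf_analyticAt_and_isInvertible_comp_inr f
  have hbaS : (b, a) ∈ S := by
    refine ⟨hf, ?_⟩
    rwa [← (hf.differentiableAt.hasFDerivAt.comp a (hasFDerivAt_prodMk_right b a)).fderiv]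
  obtain ⟨e, he⟩ := hbaS.2
  let h := (hf.hasStrictFDerivAt_prodMk_fst he).toOpenPartialHomeomorph
  have h_coe : (h : E × F → E × G) = fun w => (w.1, f w) :=
    HasStrictFDerivAt.toOpenPartialHomeomorph_coe _
  have hba : (b, a) ∈ h.source := HasStrictFDerivAt.mem_toOpenPartialHomeomorph_source _
  have h_ba : h (b, a) = (b, f (b, a)) := by rw [h_coe]
  set c := f (b, a)
  let φ : E → F := fun y => (h.symm (y, c)).2
  have h_solves : ∀ y, (y, c) ∈ h.target → f (y, φ y) = c := by
    intro y hy
    have h_inv := h.right_inv hy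
    rw [h_coe, Prod.ext_iff] at h_inv
    have hw : h.symm (y, c) = (y, φ y) := Prod.ext h_inv.1 rfl
    exact hw ▸ h_inv.2
  refine ⟨(fun y => (y, c)) ⁻¹' (h.target ∩ h.symm ⁻¹' S),
    (h.isOpen_inter_preimage_symm hS).preimage (by fun_prop), ?_, φ, ?_, ?_, ?_⟩
  · rw [mem_preimage, ← h_ba, mem_inter_iff, mem_preimage, h.left_inv hba]
    exact ⟨h.map_source hba, hbaS⟩
  · rintro y ⟨hy, hyS⟩
    obtain ⟨e', he'⟩ := hyS.2
    have hsymm : AnalyticAt 𝕜 h.symm (y, c) := by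
      refine h.analyticAt_symm hy (i := (ContinuousLinearEquiv.refl 𝕜 E).skewProd e'
        (fderiv 𝕜 f (h.symm (y, c)) ∘L inl 𝕜 E F)) ?_ ?_
      · rw [h_coe]
        exact analyticAt_fst.prod hyS.1
      · rw [h_coe]
        exact (hyS.1.hasStrictFDerivAt_prodMk_fst he').hasFDerivAt.fderiv
    exact analyticAt_snd.comp
      (hsymm.comp (f := fun y : E => (y, c)) (analyticAt_id.prod analyticAt_const))
  · show (h.symm (b, c)).2 = a
    rw [← h_ba, h.left_inv hba]
  · rintro y ⟨hy, -⟩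
    exact h_solves y hy

end ImplicitFunction

theorem AnalyticAt.sg {E : Type*} [NormedAddCommGroup E] [NormedSpace ℂ E] {g₁ g₃ g₅ : E → ℂ}
    {z : E} (h₁ : AnalyticAt ℂ g₁ z) (h₃ : AnalyticAt ℂ g₃ z) (h₅ : AnalyticAt ℂ g₅ z) :
    AnalyticAt ℂ (fun z => _root_.sg (g₁ z) (g₃ z) (g₅ z)) z := by
  unfold _root_.sg
  fun_prop

theorem hasDerivAt_sg (w1 w3 w5 : ℂ) : HasDerivAt (fun x => sg x w3 w5) (sg1 w1 w3 w5) w1 :=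
  (((((hasDerivAt_id' w1).mul_const w5).sub_const (w3 ^ 2)).sub
    (((hasDerivAt_pow 3 w1).const_mul (1 / 3)).mul_const w3)).add
    ((hasDerivAt_pow 6 w1).const_mul (1 / 45))).congr_deriv (by norm_num [sg1]; ring)

theorem sg_eq_zero_of_pow_six_eq {p : ℂ} (hp : p ^ 6 = -45 * p) : sg p 0 1 = 0 := by
  unfold sg
  linear_combination (1 / 45) * hp

theorem sg1_eq_neg_five_of_pow_six_eq {p : ℂ} (hp : p ^ 6 = -45 * p) (h0 : p ≠ 0) :
    sg1 p 0 1 = -5 := by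
  have h5 : p ^ 5 = -45 := mul_right_cancel₀ h0 (by linear_combination hp)
  unfold sg1
  linear_combination (2 / 15) * h5

theorem sg1_ne_zero_of_pow_six_eq {p : ℂ} (hp : p ^ 6 = -45 * p) : sg1 p 0 1 ≠ 0 := by
  rcases eq_or_ne p 0 with rfl | h0
  · norm_num [sg1]
  · rw [sg1_eq_neg_five_of_pow_six_eq hp h0]
    norm_num

/-- For `p ∈ ℂ` with `p⁶ = −45p`: (i) `σ(p,0,1) = 0`; (ii) `σ₁(p,0,1) =
(2/15)p⁵ − p²·0 + 1`, which is `1` if `p = 0` and `−5` if `p ≠ 0`, and in particular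
`σ₁(p,0,1) ≠ 0`; (iii) there are an open neighborhood `U ⊆ ℂ²` of `(0,1)` and a
holomorphic function `φ` on `U` with `φ(0,1) = p` and `σ(φ(w₃,w₅),w₃,w₅) = 0`
on `U`. -/
theorem statement15 (p : ℂ) (hp : p ^ 6 = -45 * p) :
    sg p 0 1 = 0 ∧
    sg1 p 0 1 = (2 / 15) * p ^ 5 - p ^ 2 * 0 + 1 ∧
    (p = 0 → sg1 p 0 1 = 1) ∧
    (p ≠ 0 → sg1 p 0 1 = -5) ∧
    sg1 p 0 1 ≠ 0 ∧
    ∃ U : Set (ℂ × ℂ), IsOpen U ∧ (0, 1) ∈ U ∧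
      ∃ φ : ℂ × ℂ → ℂ, AnalyticOnNhd ℂ φ U ∧ φ (0, 1) = p ∧
        ∀ q ∈ U, sg (φ q) q.1 q.2 = 0 := by
  have hσ₁ : sg1 p 0 1 ≠ 0 := sg1_ne_zero_of_pow_six_eq hp
  refine ⟨sg_eq_zero_of_pow_six_eq hp, by unfold sg1; ring, fun h0 => by simp [sg1, h0],
    sg1_eq_neg_five_of_pow_six_eq hp, hσ₁, ?_⟩
  have hd : (fderiv ℂ (fun x => sg x 0 1) p).IsInvertible := by
    rw [(hasDerivAt_sg p 0 1).hasFDerivAt.fderiv]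
    exact isInvertible_toSpanSingleton hσ₁
  have hσ : AnalyticAt ℂ (fun z : (ℂ × ℂ) × ℂ => sg z.2 z.1.1 z.1.2) ((0, 1), p) :=
    analyticAt_snd.sg (analyticAt_fst.comp analyticAt_fst) (analyticAt_snd.comp analyticAt_fst)
  obtain ⟨U, hU, h01, φ, hφ, hφp, hφU⟩ := hσ.exists_analyticOnNhd_implicitFunction hd
  exact ⟨U, hU, h01, φ, hφ, hφp, fun q hq => (hφU q hq).trans (sg_eq_zero_of_pow_six_eq hp)⟩
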